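/- Generalization of Theorem 1 to subsets: with the Curious Explorer iterates, poorly visited sets K_n, and intrinsic rewards r_n, fix N ≥ 0, nonnegative reals ε₀, …, ε_N satisfying, for every 0 ≤ n ≤ N, sup_{π∈Π} V_{π,r_n}(μ_n) ≤ V_{π_{n+1},r_n}(μ_n) + ε_n, and subsets Q_n ⊆ K_n for each 0 ≤ n ≤ N. With β̃(s) = β_{ñ(s)} for ñ(s) = max{ n ≤ N : s ∈ K_n } if s lies in some K_n with n ≤ N and β̃(s) = 0 otherwise, it holds that (1/2) Σ_{n=0}^N sup_{π∈Π} Σ_{s∈Q_n} d_{δ_{s₀}}^π(s) ≤ Σ_{n=0}^N ε_n + Σ_{s∈S} β̃(s) + Σ_{s∈S} sup_{π∈Π} d_{δ_{s₀}}^π(s). -/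

import Mathlib

open Finset

variable {S A : Type*} [Fintype S] [Fintype A] [Nonempty S] [Nonempty A] [DecidableEq S]

/-- `ρ` is a probability distribution on the finite type `S`. -/
def IsDist {S : Type*} [Fintype S] (ρ : S → ℝ) : Prop :=
  (∀ s, 0 ≤ ρ s) ∧ ∑ s, ρ s = 1

/-- `π` is a stationary policy: a probability distribution over actions at each state. -/
def IsPolicy (π : S → A → ℝ) : Prop := ∀ s, IsDist (π s)

/-- `P` is a transition kernel: `P s a` is a distribution on next states. -/
def IsKernel (P : S → A → S → ℝ) : Prop := ∀ s a, IsDist (P s a)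

/-- The induced state-transition kernel `K_π(s'|s) = Σ_a π(a|s) P(s'|s,a)`. -/
def kpol (P : S → A → S → ℝ) (π : S → A → ℝ) (s s' : S) : ℝ :=
  ∑ a, π s a * P s a s'

/-- One step of the Markov chain with kernel `K_π`: `ρ ↦ ρ K_π`. -/
def step (P : S → A → S → ℝ) (π : S → A → ℝ) (ρ : S → ℝ) : S → ℝ :=
  fun s' => ∑ s, ρ s * kpol P π s s'

/-- `ρ K_π^t`: the state distribution after `t` steps started from `ρ`. -/
def iterDist (P : S → A → S → ℝ) (π : S → A → ℝ) (ρ : S → ℝ) (t : ℕ) : S → ℝ :=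
  (step P π)^[t] ρ

/-- The discounted state visitation distribution
`d_ρ^π(s) = (1-γ) Σ_t γ^t (ρ K_π^t)(s)`. -/
noncomputable def dvisit (P : S → A → S → ℝ) (γ : ℝ) (π : S → A → ℝ)
    (ρ : S → ℝ) (s : S) : ℝ :=
  (1 - γ) * ∑' t : ℕ, γ ^ t * iterDist P π ρ t s

/-- The normalized value function
`V_{π,r}(ρ) = (1-γ) Σ_t γ^t Σ_{s,a} (ρ K_π^t)(s) π(a|s) r(s,a)`. -/
noncomputable def value (P : S → A → S → ℝ) (γ : ℝ) (π : S → A → ℝ)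
    (r : S → A → ℝ) (ρ : S → ℝ) : ℝ :=
  (1 - γ) * ∑' t : ℕ, γ ^ t * ∑ s, ∑ a, iterDist P π ρ t s * π s a * r s a

/-- The Dirac distribution at `s₀`. -/
def dirac (s₀ : S) : S → ℝ := fun s => if s = s₀ then 1 else 0

/-- Curious Explorer reset models: `ceMu P γ πseq s₀ 0 = μ₋₁ = δ_{s₀}` and,
for `n ≥ 0`, `ceMu P γ πseq s₀ (n+1) = μ_n = ½ D_n + ½ δ_{s₀}` where
`D_n = d_{μ_{n-1}}^{π_n}`. -/
noncomputable def ceMu (P : S → A → S → ℝ) (γ : ℝ) (πseq : ℕ → S → A → ℝ)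
    (s₀ : S) : ℕ → S → ℝ
  | 0 => dirac s₀
  | n + 1 => fun s =>
      (1 / 2) * dvisit P γ (πseq n) (ceMu P γ πseq s₀ n) s + (1 / 2) * dirac s₀ s

/-- `D_n = d_{μ_{n-1}}^{π_n}`. -/
noncomputable def ceD (P : S → A → S → ℝ) (γ : ℝ) (πseq : ℕ → S → A → ℝ)
    (s₀ : S) (n : ℕ) : S → ℝ :=
  dvisit P γ (πseq n) (ceMu P γ πseq s₀ n)

open scoped Classical in
/-- The set of poorly visited states `K_n = { s : Σ_{i=0}^n D_i(s) ≤ β_n }`. -/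
noncomputable def ceK (P : S → A → S → ℝ) (γ : ℝ) (πseq : ℕ → S → A → ℝ)
    (s₀ : S) (β : ℕ → ℝ) (n : ℕ) : Finset S :=
  Finset.univ.filter fun s => ∑ i ∈ Finset.range (n + 1), ceD P γ πseq s₀ i s ≤ β n

/-- The intrinsic reward `r_n(s,a) = 1_{s ∈ K_n}`. -/
noncomputable def ceR (P : S → A → S → ℝ) (γ : ℝ) (πseq : ℕ → S → A → ℝ)
    (s₀ : S) (β : ℕ → ℝ) (n : ℕ) (s : S) (_a : A) : ℝ :=
  if s ∈ ceK P γ πseq s₀ β n then 1 else 0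

open scoped Classical in
/-- `β̃(s) = β_{ñ(s)}` where `ñ(s) = max { n ≤ N : s ∈ K_n }` if `s` lies in some
`K_n` with `n ≤ N`, and `β̃(s) = 0` otherwise. -/
noncomputable def ceBetaTilde (P : S → A → S → ℝ) (γ : ℝ) (πseq : ℕ → S → A → ℝ)
    (s₀ : S) (β : ℕ → ℝ) (N : ℕ) (s : S) : ℝ :=
  if ∃ n ≤ N, s ∈ ceK P γ πseq s₀ β n then
    β (Nat.findGreatest (fun n => s ∈ ceK P γ πseq s₀ β n) N)
  else 0

/-!
Let `w_n` be the optimal value function of the reward `1_{K_n}`, the fixed point of the Bellman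
optimality operator (a `γ`-contraction). Then `sup_π V_{π,r_n}(ρ) = Σ_s ρ(s) w_n(s)` is linear in
`ρ`, so, as `μ_n = ½ D_n + ½ δ_{s₀}`, the `ε_n`-optimality of `π_{n+1}` gives
`½ sup_π Σ_{Q_n} d_{δ_{s₀}}^π + ½ ⟨D_n, w_n⟩ ≤ ε_n + Σ_{K_n} D_{n+1}`.
Split `K_n` according to whether `n = ñ(s)`. On the states with `n = ñ(s)`,
`D_{n+1} = ½ d_{D_n}^{π_{n+1}} + ½ d_{δ_{s₀}}^{π_{n+1}}` has mass at most
`½ ⟨D_n, w_n⟩ + ½ Σ sup_π d_{δ_{s₀}}^π`, and every state is counted this way for at most one `n`.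
For the other states `n < ñ(s)`, and over all `n` these masses add up to at most
`Σ_{i ≤ ñ(s)} D_i(s) ≤ β̃(s)`.

Values are compared with `Σ ρ w` through the flow equation `d_ρ^π = (1 - γ) ρ + γ d_ρ^π K_π`.
-/

section MarkovChain

variable {S A : Type*} [Fintype S] [Fintype A] {P : S → A → S → ℝ} {π : S → A → ℝ}
  {γ : ℝ} {ρ : S → ℝ}

theorem IsDist.sum_le_one (hρ : IsDist ρ) (K : Finset S) : ∑ s ∈ K, ρ s ≤ 1 :=
  hρ.2 ▸ sum_le_sum_of_subset_of_nonneg (subset_univ K) fun s _ _ => hρ.1 s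

theorem IsDist.le_one (hρ : IsDist ρ) (s : S) : ρ s ≤ 1 := by
  simpa using hρ.sum_le_one {s}

theorem IsDist.add_smul {ρ₁ ρ₂ : S → ℝ} (hρ₁ : IsDist ρ₁) (hρ₂ : IsDist ρ₂) {a b : ℝ}
    (ha : 0 ≤ a) (hb : 0 ≤ b) (hab : a + b = 1) : IsDist (a • ρ₁ + b • ρ₂) := by
  refine ⟨fun s => add_nonneg (mul_nonneg ha (hρ₁.1 s)) (mul_nonneg hb (hρ₂.1 s)), ?_⟩
  simp only [Pi.add_apply, Pi.smul_apply, smul_eq_mul, sum_add_distrib, ← mul_sum, hρ₁.2,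
    hρ₂.2, mul_one, hab]

theorem IsDist.sum_mul_le_add_dist {p : S → ℝ} (hp : IsDist p) (v u : S → ℝ) :
    ∑ s, p s * v s ≤ ∑ s, p s * u s + dist v u := by
  have h : ∑ s, p s * (v s - u s) ≤ ∑ s, p s * dist v u := sum_le_sum fun s _ =>
    mul_le_mul_of_nonneg_left ((le_abs_self _).trans (dist_le_pi_dist v u s)) (hp.1 s)
  simp only [mul_sub, sum_sub_distrib, ← sum_mul, hp.2, one_mul] at h
  linarith

theorem isDist_dirac [DecidableEq S] (s₀ : S) : IsDist (dirac s₀) :=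
  ⟨fun s => by unfold dirac; split_ifs <;> norm_num, by simp [dirac]⟩

theorem sum_kpol_mul (π : S → A → ℝ) (s : S) (w : S → ℝ) :
    ∑ s', kpol P π s s' * w s' = ∑ a, π s a * ∑ s', P s a s' * w s' := by
  simp only [kpol, sum_mul, mul_sum, mul_assoc]
  exact sum_comm

theorem IsKernel.isDist_kpol (hP : IsKernel P) (hπ : IsPolicy π) (s : S) :
    IsDist (kpol P π s) := by
  refine ⟨fun s' => sum_nonneg fun a _ => mul_nonneg ((hπ s).1 a) ((hP s a).1 s'), ?_⟩
  simpa [(hP _ _).2, (hπ s).2] using sum_kpol_mul (P := P) π s 1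

theorem sum_step_mul (π : S → A → ℝ) (ν w : S → ℝ) :
    ∑ s', step P π ν s' * w s' = ∑ s, ν s * ∑ s', kpol P π s s' * w s' := by
  simp only [step, sum_mul, mul_sum, mul_assoc]
  exact sum_comm

theorem IsKernel.isDist_step (hP : IsKernel P) (hπ : IsPolicy π) (hρ : IsDist ρ) :
    IsDist (step P π ρ) := by
  refine ⟨fun s' => sum_nonneg fun s _ => mul_nonneg (hρ.1 s) ((hP.isDist_kpol hπ s).1 s'), ?_⟩
  simpa [(hP.isDist_kpol hπ _).2, hρ.2] using sum_step_mul (P := P) π ρ 1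

theorem iterDist_succ (t : ℕ) :
    iterDist P π ρ (t + 1) = step P π (iterDist P π ρ t) :=
  Function.iterate_succ_apply' _ _ _

theorem IsKernel.isDist_iterDist (hP : IsKernel P) (hπ : IsPolicy π) (hρ : IsDist ρ)
    (t : ℕ) : IsDist (iterDist P π ρ t) := by
  induction t with
  | zero => exact hρ
  | succ t ih => rw [iterDist_succ]; exact hP.isDist_step hπ ih

theorem step_add_smul (a b : ℝ) (ρ₁ ρ₂ : S → ℝ) :
    step P π (a • ρ₁ + b • ρ₂) = a • step P π ρ₁ + b • step P π ρ₂ := by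
  funext s'
  simp only [step, Pi.add_apply, Pi.smul_apply, smul_eq_mul, mul_sum, ← sum_add_distrib]
  exact sum_congr rfl fun _ _ => by ring

theorem iterDist_add_smul (a b : ℝ) (ρ₁ ρ₂ : S → ℝ) (t : ℕ) :
    iterDist P π (a • ρ₁ + b • ρ₂) t = a • iterDist P π ρ₁ t + b • iterDist P π ρ₂ t := by
  induction t with
  | zero => rfl
  | succ t ih => simp only [iterDist_succ, ih, step_add_smul]

theorem IsKernel.summable_iterDist (hP : IsKernel P) (hπ : IsPolicy π) (hρ : IsDist ρ)
    (hγ0 : 0 ≤ γ) (hγ1 : γ < 1) (s : S) :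
    Summable fun t => γ ^ t * iterDist P π ρ t s :=
  .of_nonneg_of_le (fun t => mul_nonneg (pow_nonneg hγ0 t) ((hP.isDist_iterDist hπ hρ t).1 s))
    (fun t => mul_le_of_le_one_right (pow_nonneg hγ0 t) ((hP.isDist_iterDist hπ hρ t).le_one s))
    (summable_geometric_of_lt_one hγ0 hγ1)

theorem IsKernel.isDist_dvisit (hP : IsKernel P) (hπ : IsPolicy π) (hρ : IsDist ρ)
    (hγ0 : 0 ≤ γ) (hγ1 : γ < 1) : IsDist (dvisit P γ π ρ) := by
  refine ⟨fun s => mul_nonneg (sub_nonneg.2 hγ1.le) (tsum_nonneg fun t =>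
    mul_nonneg (pow_nonneg hγ0 t) ((hP.isDist_iterDist hπ hρ t).1 s)), ?_⟩
  simp only [dvisit, ← mul_sum]
  rw [← Summable.tsum_finsetSum fun s _ => hP.summable_iterDist hπ hρ hγ0 hγ1 s]
  simp only [← mul_sum, (hP.isDist_iterDist hπ hρ _).2, mul_one]
  rw [tsum_geometric_of_lt_one hγ0 hγ1, mul_inv_cancel₀ (sub_ne_zero.2 hγ1.ne')]

theorem IsKernel.dvisit_add_smul (hP : IsKernel P) (hπ : IsPolicy π) {ρ₁ ρ₂ : S → ℝ}
    (hρ₁ : IsDist ρ₁) (hρ₂ : IsDist ρ₂) (hγ0 : 0 ≤ γ) (hγ1 : γ < 1) (a b : ℝ) :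
    dvisit P γ π (a • ρ₁ + b • ρ₂) = a • dvisit P γ π ρ₁ + b • dvisit P γ π ρ₂ := by
  funext s
  simp only [dvisit, iterDist_add_smul, Pi.add_apply, Pi.smul_apply, smul_eq_mul, mul_add,
    mul_left_comm _ a, mul_left_comm _ b]
  rw [Summable.tsum_add ((hP.summable_iterDist hπ hρ₁ hγ0 hγ1 s).mul_left a)
    ((hP.summable_iterDist hπ hρ₂ hγ0 hγ1 s).mul_left b), tsum_mul_left, tsum_mul_left]
  ring

theorem IsKernel.dvisit_eq_add_step (hP : IsKernel P) (hπ : IsPolicy π) (hρ : IsDist ρ)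
    (hγ0 : 0 ≤ γ) (hγ1 : γ < 1) :
    dvisit P γ π ρ = (1 - γ) • ρ + γ • step P π (dvisit P γ π ρ) := by
  funext s'
  have hstep : step P π (dvisit P γ π ρ) s' =
      (1 - γ) * ∑' t : ℕ, γ ^ t * iterDist P π ρ (t + 1) s' := by
    simp only [step, dvisit, iterDist_succ, mul_assoc, ← tsum_mul_right, ← mul_sum]
    rw [← Summable.tsum_finsetSum fun s _ => by
      simpa only [mul_assoc] using (hP.summable_iterDist hπ hρ hγ0 hγ1 s).mul_right (kpol P π s s')]
    simp only [mul_sum]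
  rw [Pi.add_apply, Pi.smul_apply, Pi.smul_apply, hstep, dvisit,
    (hP.summable_iterDist hπ hρ hγ0 hγ1 s').tsum_eq_zero_add]
  simp only [smul_eq_mul, pow_succ, mul_assoc, mul_left_comm _ γ, tsum_mul_left]
  rw [pow_zero, one_mul, iterDist, Function.iterate_zero_apply]
  ring

end MarkovChain

section Value

variable {S A : Type*} [Fintype S] [Fintype A] {P : S → A → S → ℝ} {π : S → A → ℝ}
  {γ : ℝ} {ρ : S → ℝ}

theorem IsKernel.value_eq_sum_dvisit_mul (hP : IsKernel P) (hπ : IsPolicy π) (hρ : IsDist ρ)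
    (hγ0 : 0 ≤ γ) (hγ1 : γ < 1) (r : S → ℝ) :
    value P γ π (fun s _ => r s) ρ = ∑ s, dvisit P γ π ρ s * r s := by
  have hπr : ∀ t s, ∑ a, iterDist P π ρ t s * π s a * r s = iterDist P π ρ t s * r s :=
    fun t s => by rw [← sum_mul, ← mul_sum, (hπ s).2, mul_one]
  simp only [value, dvisit, hπr, mul_sum, ← mul_assoc]
  rw [Summable.tsum_finsetSum fun s _ => (hP.summable_iterDist hπ hρ hγ0 hγ1 s).mul_right (r s),
    mul_sum]
  simp only [← tsum_mul_right, mul_assoc]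

theorem IsKernel.sum_dvisit_mul_bellman_defect (hP : IsKernel P) (hπ : IsPolicy π)
    (hρ : IsDist ρ) (hγ0 : 0 ≤ γ) (hγ1 : γ < 1) (r w : S → ℝ) :
    ∑ s, dvisit P γ π ρ s * (w s - ((1 - γ) * r s + γ * ∑ s', kpol P π s s' * w s')) =
      (1 - γ) * (∑ s, ρ s * w s - ∑ s, dvisit P γ π ρ s * r s) := by
  have hflow : ∑ s, dvisit P γ π ρ s * w s = (1 - γ) * ∑ s, ρ s * w s +
      γ * ∑ s, dvisit P γ π ρ s * ∑ s', kpol P π s s' * w s' := by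
    rw [← sum_step_mul]
    conv_lhs => rw [hP.dvisit_eq_add_step hπ hρ hγ0 hγ1]
    simp only [Pi.add_apply, Pi.smul_apply, smul_eq_mul, add_mul, sum_add_distrib, mul_assoc,
      ← mul_sum]
  simp only [mul_sub, mul_add, sum_sub_distrib, sum_add_distrib, mul_left_comm _ (1 - γ),
    mul_left_comm _ γ, ← mul_sum]
  linarith

theorem IsKernel.value_le_of_bellman_le (hP : IsKernel P) (hπ : IsPolicy π) (hρ : IsDist ρ)
    (hγ0 : 0 ≤ γ) (hγ1 : γ < 1) {r w : S → ℝ}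
    (hw : ∀ s, (1 - γ) * r s + γ * ∑ s', kpol P π s s' * w s' ≤ w s) :
    value P γ π (fun s _ => r s) ρ ≤ ∑ s, ρ s * w s := by
  have hdefect := hP.sum_dvisit_mul_bellman_defect hπ hρ hγ0 hγ1 r w
  have hnonneg : 0 ≤ ∑ s, dvisit P γ π ρ s *
      (w s - ((1 - γ) * r s + γ * ∑ s', kpol P π s s' * w s')) :=
    sum_nonneg fun s _ => mul_nonneg ((hP.isDist_dvisit hπ hρ hγ0 hγ1).1 s) (sub_nonneg.2 (hw s))
  rw [hdefect] at hnonneg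
  rw [hP.value_eq_sum_dvisit_mul hπ hρ hγ0 hγ1]
  exact sub_nonneg.1 ((mul_nonneg_iff_of_pos_left (sub_pos.2 hγ1)).1 hnonneg)

theorem IsKernel.value_eq_of_bellman_eq (hP : IsKernel P) (hπ : IsPolicy π) (hρ : IsDist ρ)
    (hγ0 : 0 ≤ γ) (hγ1 : γ < 1) {r w : S → ℝ}
    (hw : ∀ s, (1 - γ) * r s + γ * ∑ s', kpol P π s s' * w s' = w s) :
    value P γ π (fun s _ => r s) ρ = ∑ s, ρ s * w s := by
  have hdefect := hP.sum_dvisit_mul_bellman_defect hπ hρ hγ0 hγ1 r w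
  simp only [hw, sub_self, mul_zero, sum_const_zero] at hdefect
  rw [hP.value_eq_sum_dvisit_mul hπ hρ hγ0 hγ1]
  have := (mul_eq_zero.1 hdefect.symm).resolve_left (sub_ne_zero.2 hγ1.ne')
  linarith

theorem IsKernel.dvisit_le_iSup (hP : IsKernel P) (hπ : IsPolicy π) (hρ : IsDist ρ)
    (hγ0 : 0 ≤ γ) (hγ1 : γ < 1) (s : S) :
    dvisit P γ π ρ s ≤ ⨆ π' : {π' : S → A → ℝ // IsPolicy π'}, dvisit P γ π'.1 ρ s :=
  le_ciSup (f := fun π' : {π' : S → A → ℝ // IsPolicy π'} => dvisit P γ π'.1 ρ s)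
    ⟨1, by rintro _ ⟨π', rfl⟩; exact (hP.isDist_dvisit π'.2 hρ hγ0 hγ1).le_one s⟩ ⟨π, hπ⟩

end Value

section BellmanOptimality

variable {S A : Type*} [Fintype S] [Fintype A] [Nonempty A] {P : S → A → S → ℝ}
  {π : S → A → ℝ} {γ : ℝ} {r w : S → ℝ}

noncomputable def bellmanOpt (P : S → A → S → ℝ) (γ : ℝ) (r v : S → ℝ) (s : S) : ℝ :=
  (1 - γ) * r s + γ * univ.sup' univ_nonempty fun a => ∑ s', P s a s' * v s'

theorem IsKernel.bellmanOpt_le_add_dist (hP : IsKernel P) (hγ0 : 0 ≤ γ) (r v u : S → ℝ)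
    (s : S) : bellmanOpt P γ r v s ≤ bellmanOpt P γ r u s + γ * dist v u := by
  have h : (univ.sup' univ_nonempty fun a => ∑ s', P s a s' * v s') ≤
      (univ.sup' univ_nonempty fun a => ∑ s', P s a s' * u s') + dist v u :=
    sup'_le _ _ fun a _ => ((hP s a).sum_mul_le_add_dist v u).trans
      (add_le_add_left (le_sup' (fun a => ∑ s', P s a s' * u s') (mem_univ a)) _)
  unfold bellmanOpt
  linarith [mul_le_mul_of_nonneg_left h hγ0]

theorem IsKernel.contractingWith_bellmanOpt (hP : IsKernel P) (hγ0 : 0 ≤ γ) (hγ1 : γ < 1)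
    (r : S → ℝ) : ContractingWith ⟨γ, hγ0⟩ (bellmanOpt P γ r) := by
  refine ⟨by exact_mod_cast hγ1, LipschitzWith.of_dist_le_mul fun v u => ?_⟩
  refine (dist_pi_le_iff (mul_nonneg hγ0 dist_nonneg)).2 fun s => ?_
  have h₁ := hP.bellmanOpt_le_add_dist hγ0 r v u s
  have h₂ := hP.bellmanOpt_le_add_dist hγ0 r u v s
  rw [dist_comm u v] at h₂
  rw [Real.dist_eq, abs_sub_le_iff]
  constructor <;> linarith

theorem bellman_le_of_isFixedPt (hπ : IsPolicy π) (hγ0 : 0 ≤ γ)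
    (hw : Function.IsFixedPt (bellmanOpt P γ r) w) (s : S) :
    (1 - γ) * r s + γ * ∑ s', kpol P π s s' * w s' ≤ w s := by
  have h : ∑ a, π s a * ∑ s', P s a s' * w s' ≤
      univ.sup' univ_nonempty fun a => ∑ s', P s a s' * w s' :=
    calc _ ≤ ∑ a, π s a * univ.sup' univ_nonempty fun a => ∑ s', P s a s' * w s' :=
          sum_le_sum fun a _ => mul_le_mul_of_nonneg_left
            (le_sup' (fun a => ∑ s', P s a s' * w s') (mem_univ a)) ((hπ s).1 a)
      _ = _ := by rw [← sum_mul, (hπ s).2, one_mul]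
  conv_rhs => rw [← hw]
  rw [sum_kpol_mul, bellmanOpt]
  gcongr

/-- The witness is the deterministic policy that picks a maximizing action at every state. -/
theorem exists_isPolicy_bellman_eq_of_isFixedPt
    (hw : Function.IsFixedPt (bellmanOpt P γ r) w) :
    ∃ π, IsPolicy π ∧ ∀ s, (1 - γ) * r s + γ * ∑ s', kpol P π s s' * w s' = w s := by
  classical
  choose a ha using fun s => exists_mem_eq_sup' univ_nonempty fun a => ∑ s', P s a s' * w s'
  refine ⟨fun s b => if b = a s then 1 else 0,
    fun s => ⟨fun b => by dsimp only; split_ifs <;> norm_num, by simp⟩, fun s => ?_⟩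
  conv_rhs => rw [← hw]
  simp [sum_kpol_mul, bellmanOpt, (ha s).2]

theorem IsKernel.exists_optimal_value (hP : IsKernel P) (hγ0 : 0 ≤ γ) (hγ1 : γ < 1)
    (r : S → ℝ) : ∃ w : S → ℝ,
      (∀ π, IsPolicy π → ∀ ρ, IsDist ρ → value P γ π (fun s _ => r s) ρ ≤ ∑ s, ρ s * w s) ∧
      ∃ π, IsPolicy π ∧ ∀ ρ, IsDist ρ → value P γ π (fun s _ => r s) ρ = ∑ s, ρ s * w s := by
  have hw := (hP.contractingWith_bellmanOpt hγ0 hγ1 r).fixedPoint_isFixedPt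
  obtain ⟨π', hπ', hgreedy⟩ := exists_isPolicy_bellman_eq_of_isFixedPt hw
  exact ⟨_, fun π hπ ρ hρ => hP.value_le_of_bellman_le hπ hρ hγ0 hγ1
    (bellman_le_of_isFixedPt hπ hγ0 hw), π', hπ', fun ρ hρ =>
    hP.value_eq_of_bellman_eq hπ' hρ hγ0 hγ1 hgreedy⟩

end BellmanOptimality

section CuriousExplorer

variable {S A : Type*} [Fintype S] [Fintype A] [DecidableEq S] {P : S → A → S → ℝ} {γ : ℝ}
  {πseq : ℕ → S → A → ℝ} {s₀ : S} {β : ℕ → ℝ}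

theorem ceMu_succ (n : ℕ) :
    ceMu P γ πseq s₀ (n + 1) = (1 / 2 : ℝ) • ceD P γ πseq s₀ n + (1 / 2 : ℝ) • dirac s₀ :=
  rfl

theorem IsKernel.isDist_ceMu (hP : IsKernel P) (hπseq : ∀ k, IsPolicy (πseq k))
    (hγ0 : 0 ≤ γ) (hγ1 : γ < 1) (n : ℕ) : IsDist (ceMu P γ πseq s₀ n) := by
  induction n with
  | zero => exact isDist_dirac s₀
  | succ n ih =>
    rw [ceMu_succ]
    exact (hP.isDist_dvisit (hπseq n) ih hγ0 hγ1).add_smul (isDist_dirac s₀) (by norm_num)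
      (by norm_num) (by norm_num)

theorem IsKernel.isDist_ceD (hP : IsKernel P) (hπseq : ∀ k, IsPolicy (πseq k))
    (hγ0 : 0 ≤ γ) (hγ1 : γ < 1) (n : ℕ) : IsDist (ceD P γ πseq s₀ n) :=
  hP.isDist_dvisit (hπseq n) (hP.isDist_ceMu hπseq hγ0 hγ1 n) hγ0 hγ1

theorem IsKernel.ceD_succ (hP : IsKernel P) (hπseq : ∀ k, IsPolicy (πseq k))
    (hγ0 : 0 ≤ γ) (hγ1 : γ < 1) (n : ℕ) :
    ceD P γ πseq s₀ (n + 1) = (1 / 2 : ℝ) • dvisit P γ (πseq (n + 1)) (ceD P γ πseq s₀ n) +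
      (1 / 2 : ℝ) • dvisit P γ (πseq (n + 1)) (dirac s₀) := by
  rw [ceD, ceMu_succ]
  exact hP.dvisit_add_smul (hπseq _) (hP.isDist_ceD hπseq hγ0 hγ1 n) (isDist_dirac s₀) hγ0 hγ1 _ _

theorem IsKernel.value_ceR (hP : IsKernel P) {π : S → A → ℝ} (hπ : IsPolicy π) {ρ : S → ℝ}
    (hρ : IsDist ρ) (hγ0 : 0 ≤ γ) (hγ1 : γ < 1) (n : ℕ) :
    value P γ π (ceR P γ πseq s₀ β n) ρ = ∑ s ∈ ceK P γ πseq s₀ β n, dvisit P γ π ρ s := by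
  rw [show ceR P γ πseq s₀ β n = fun s _ => if s ∈ ceK P γ πseq s₀ β n then 1 else 0 from rfl,
    hP.value_eq_sum_dvisit_mul hπ hρ hγ0 hγ1]
  simp [sum_ite_mem]

theorem IsKernel.half_iSup_add_half_le (hP : IsKernel P) (hπseq : ∀ k, IsPolicy (πseq k))
    (hγ0 : 0 ≤ γ) (hγ1 : γ < 1) {n : ℕ} {ε : ℝ}
    (hopt : (⨆ π : {π' : S → A → ℝ // IsPolicy π'},
        value P γ π.1 (ceR P γ πseq s₀ β n) (ceMu P γ πseq s₀ (n + 1))) ≤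
      value P γ (πseq (n + 1)) (ceR P γ πseq s₀ β n) (ceMu P γ πseq s₀ (n + 1)) + ε)
    {Q : Finset S} (hQ : Q ⊆ ceK P γ πseq s₀ β n) {w : S → ℝ}
    (hw : ∀ π, IsPolicy π → ∀ ρ, IsDist ρ →
      value P γ π (ceR P γ πseq s₀ β n) ρ ≤ ∑ s, ρ s * w s)
    (hw' : ∃ π, IsPolicy π ∧ ∀ ρ, IsDist ρ →
      value P γ π (ceR P γ πseq s₀ β n) ρ = ∑ s, ρ s * w s) :
    (1 / 2) * (⨆ π : {π' : S → A → ℝ // IsPolicy π'}, ∑ s ∈ Q, dvisit P γ π.1 (dirac s₀) s) +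
        (1 / 2) * ∑ s, ceD P γ πseq s₀ n s * w s ≤
      ε + ∑ s ∈ ceK P γ πseq s₀ β n, ceD P γ πseq s₀ (n + 1) s := by
  obtain ⟨π', hπ', hπ'w⟩ := hw'
  have hμ := hP.isDist_ceMu (s₀ := s₀) hπseq hγ0 hγ1 (n + 1)
  have hQw : (⨆ π : {π' : S → A → ℝ // IsPolicy π'}, ∑ s ∈ Q, dvisit P γ π.1 (dirac s₀) s) ≤
      w s₀ := by
    have : Nonempty {π' : S → A → ℝ // IsPolicy π'} := ⟨⟨πseq 0, hπseq 0⟩⟩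
    refine ciSup_le fun π => ?_
    calc ∑ s ∈ Q, dvisit P γ π.1 (dirac s₀) s
        ≤ ∑ s ∈ ceK P γ πseq s₀ β n, dvisit P γ π.1 (dirac s₀) s :=
          sum_le_sum_of_subset_of_nonneg hQ fun s _ _ =>
            (hP.isDist_dvisit π.2 (isDist_dirac s₀) hγ0 hγ1).1 s
      _ = value P γ π.1 (ceR P γ πseq s₀ β n) (dirac s₀) :=
          (hP.value_ceR π.2 (isDist_dirac s₀) hγ0 hγ1 n).symm
      _ ≤ ∑ s, dirac s₀ s * w s := hw π.1 π.2 _ (isDist_dirac s₀)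
      _ = w s₀ := by simp [dirac]
  have hμw : ∑ s, ceMu P γ πseq s₀ (n + 1) s * w s =
      (1 / 2) * ∑ s, ceD P γ πseq s₀ n s * w s + (1 / 2) * w s₀ := by
    simp [ceMu_succ, add_mul, sum_add_distrib, mul_assoc, ← mul_sum, dirac]
  have hbdd : BddAbove (Set.range fun π : {π' : S → A → ℝ // IsPolicy π'} =>
      value P γ π.1 (ceR P γ πseq s₀ β n) (ceMu P γ πseq s₀ (n + 1))) := by
    refine ⟨1, ?_⟩
    rintro _ ⟨π, rfl⟩
    exact (hP.value_ceR π.2 hμ hγ0 hγ1 n).trans_le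
      ((hP.isDist_dvisit π.2 hμ hγ0 hγ1).sum_le_one _)
  have hgreedy := (le_ciSup hbdd ⟨π', hπ'⟩).trans hopt
  rw [hπ'w _ hμ, hμw, hP.value_ceR (hπseq _) hμ hγ0 hγ1] at hgreedy
  change _ ≤ ∑ s ∈ _, ceD P γ πseq s₀ (n + 1) s + ε at hgreedy
  linarith

theorem IsKernel.sum_ceD_succ_le (hP : IsKernel P) (hπseq : ∀ k, IsPolicy (πseq k))
    (hγ0 : 0 ≤ γ) (hγ1 : γ < 1) {n : ℕ} {L : Finset S} (hL : L ⊆ ceK P γ πseq s₀ β n)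
    {w : S → ℝ} (hw : ∀ π, IsPolicy π → ∀ ρ, IsDist ρ →
      value P γ π (ceR P γ πseq s₀ β n) ρ ≤ ∑ s, ρ s * w s) :
    ∑ s ∈ L, ceD P γ πseq s₀ (n + 1) s ≤ (1 / 2) * ∑ s, ceD P γ πseq s₀ n s * w s +
      (1 / 2) * ∑ s ∈ L, ⨆ π : {π' : S → A → ℝ // IsPolicy π'}, dvisit P γ π.1 (dirac s₀) s := by
  have hD := hP.isDist_ceD (s₀ := s₀) hπseq hγ0 hγ1 n
  have h₁ : ∑ s ∈ L, dvisit P γ (πseq (n + 1)) (ceD P γ πseq s₀ n) s ≤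
      ∑ s, ceD P γ πseq s₀ n s * w s :=
    calc _ ≤ ∑ s ∈ ceK P γ πseq s₀ β n, dvisit P γ (πseq (n + 1)) (ceD P γ πseq s₀ n) s :=
          sum_le_sum_of_subset_of_nonneg hL fun s _ _ =>
            (hP.isDist_dvisit (hπseq _) hD hγ0 hγ1).1 s
      _ = value P γ (πseq (n + 1)) (ceR P γ πseq s₀ β n) (ceD P γ πseq s₀ n) :=
          (hP.value_ceR (hπseq _) hD hγ0 hγ1 n).symm
      _ ≤ _ := hw _ (hπseq _) _ hD
  have h₂ : ∑ s ∈ L, dvisit P γ (πseq (n + 1)) (dirac s₀) s ≤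
      ∑ s ∈ L, ⨆ π : {π' : S → A → ℝ // IsPolicy π'}, dvisit P γ π.1 (dirac s₀) s :=
    sum_le_sum fun s _ => hP.dvisit_le_iSup (hπseq _) (isDist_dirac s₀) hγ0 hγ1 s
  rw [hP.ceD_succ hπseq hγ0 hγ1]
  simp only [Pi.add_apply, Pi.smul_apply, smul_eq_mul, sum_add_distrib, ← mul_sum]
  linarith

theorem IsKernel.half_iSup_le [Nonempty A] (hP : IsKernel P)
    (hπseq : ∀ k, IsPolicy (πseq k)) (hγ0 : 0 ≤ γ) (hγ1 : γ < 1) {n : ℕ} {ε : ℝ}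
    (hopt : (⨆ π : {π' : S → A → ℝ // IsPolicy π'},
        value P γ π.1 (ceR P γ πseq s₀ β n) (ceMu P γ πseq s₀ (n + 1))) ≤
      value P γ (πseq (n + 1)) (ceR P γ πseq s₀ β n) (ceMu P γ πseq s₀ (n + 1)) + ε)
    {Q : Finset S} (hQ : Q ⊆ ceK P γ πseq s₀ β n) (p : S → Prop) [DecidablePred p] :
    (1 / 2) * (⨆ π : {π' : S → A → ℝ // IsPolicy π'}, ∑ s ∈ Q, dvisit P γ π.1 (dirac s₀) s) ≤
      ε + ∑ s ∈ ceK P γ πseq s₀ β n with ¬p s, ceD P γ πseq s₀ (n + 1) s +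
        (1 / 2) * ∑ s ∈ ceK P γ πseq s₀ β n with p s,
          ⨆ π : {π' : S → A → ℝ // IsPolicy π'}, dvisit P γ π.1 (dirac s₀) s := by
  obtain ⟨w, hw, hw'⟩ :=
    hP.exists_optimal_value hγ0 hγ1 fun s => if s ∈ ceK P γ πseq s₀ β n then 1 else 0
  have hA := hP.half_iSup_add_half_le hπseq hγ0 hγ1 hopt hQ hw hw'
  have hB := hP.sum_ceD_succ_le hπseq hγ0 hγ1 (filter_subset p _) hw
  rw [← sum_filter_add_sum_filter_not (ceK P γ πseq s₀ β n) p] at hA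
  linarith

/-- `ñ(s)`, the last index `n ≤ N` with `s ∈ K_n` (it is `0` if there is none). -/
noncomputable def ceLast (P : S → A → S → ℝ) (γ : ℝ) (πseq : ℕ → S → A → ℝ) (s₀ : S)
    (β : ℕ → ℝ) (N : ℕ) (s : S) : ℕ :=
  Nat.findGreatest (fun n => s ∈ ceK P γ πseq s₀ β n) N

/-- Since `s ∈ K_{ñ(s)}`, the rounds `n < ñ(s)` together contribute at most
`Σ_{i ≤ ñ(s)} D_i(s) ≤ β_{ñ(s)}`. -/
theorem IsKernel.sum_ceD_succ_le_ceBetaTilde (hP : IsKernel P)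
    (hπseq : ∀ k, IsPolicy (πseq k)) (hγ0 : 0 ≤ γ) (hγ1 : γ < 1) (N : ℕ) (s : S) :
    ∑ n ∈ range (N + 1) with s ∈ ceK P γ πseq s₀ β n ∧ ceLast P γ πseq s₀ β N s ≠ n,
        ceD P γ πseq s₀ (n + 1) s ≤ ceBetaTilde P γ πseq s₀ β N s := by
  by_cases h : ∃ n ≤ N, s ∈ ceK P γ πseq s₀ β n
  · obtain ⟨m, hmN, hm⟩ := h
    have hlast : s ∈ ceK P γ πseq s₀ β (ceLast P γ πseq s₀ β N s) :=
      Nat.findGreatest_spec (P := fun n => s ∈ ceK P γ πseq s₀ β n) hmN hm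
    have hsub : {n ∈ range (N + 1) | s ∈ ceK P γ πseq s₀ β n ∧ ceLast P γ πseq s₀ β N s ≠ n} ⊆
        range (ceLast P γ πseq s₀ β N s) := fun n hn => by
      simp only [mem_filter, mem_range] at hn ⊢
      exact lt_of_le_of_ne (Nat.le_findGreatest (by omega) hn.2.1) hn.2.2.symm
    have hD := fun i => (hP.isDist_ceD (s₀ := s₀) hπseq hγ0 hγ1 i).1 s
    calc _ ≤ ∑ n ∈ range (ceLast P γ πseq s₀ β N s), ceD P γ πseq s₀ (n + 1) s :=
          sum_le_sum_of_subset_of_nonneg hsub fun n _ _ => hD _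
      _ ≤ ∑ i ∈ range (ceLast P γ πseq s₀ β N s + 1), ceD P γ πseq s₀ i s := by
          rw [sum_range_succ']
          linarith [hD 0]
      _ ≤ β (ceLast P γ πseq s₀ β N s) := (mem_filter.1 hlast).2
      _ = ceBetaTilde P γ πseq s₀ β N s := (if_pos ⟨m, hmN, hm⟩).symm
  · rw [ceBetaTilde, if_neg h]
    refine (sum_eq_zero fun n hn => (h ⟨n, ?_, ?_⟩).elim).le
    all_goals simp only [mem_filter, mem_range] at hn
    · omega
    · exact hn.2.1

theorem IsKernel.sum_sum_ceD_succ_le_sum_ceBetaTilde (hP : IsKernel P)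
    (hπseq : ∀ k, IsPolicy (πseq k)) (hγ0 : 0 ≤ γ) (hγ1 : γ < 1) (N : ℕ) :
    ∑ n ∈ range (N + 1), ∑ s ∈ ceK P γ πseq s₀ β n with ¬ceLast P γ πseq s₀ β N s = n,
        ceD P γ πseq s₀ (n + 1) s ≤ ∑ s, ceBetaTilde P γ πseq s₀ β N s := by
  rw [sum_comm' (t' := univ)
    (s' := fun s => {n ∈ range (N + 1) | s ∈ ceK P γ πseq s₀ β n ∧ ceLast P γ πseq s₀ β N s ≠ n})
    (by intro n s; simp only [mem_filter, mem_univ, ne_eq]; tauto)]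
  exact sum_le_sum fun s _ => hP.sum_ceD_succ_le_ceBetaTilde hπseq hγ0 hγ1 N s

end CuriousExplorer

theorem stmt13_ce_provable_subsets_general
    (P : S → A → S → ℝ) (γ : ℝ) (hP : IsKernel P) (hγ0 : 0 ≤ γ) (hγ1 : γ < 1)
    (s₀ : S) (πseq : ℕ → S → A → ℝ) (hπseq : ∀ k, IsPolicy (πseq k))
    (β : ℕ → ℝ) (N : ℕ)
    (ε : ℕ → ℝ)
    (hopt : ∀ n ≤ N,
      (⨆ π : {π' : S → A → ℝ // IsPolicy π'},
        value P γ π.1 (ceR P γ πseq s₀ β n) (ceMu P γ πseq s₀ (n + 1))) ≤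
      value P γ (πseq (n + 1)) (ceR P γ πseq s₀ β n) (ceMu P γ πseq s₀ (n + 1))
        + ε n)
    (Q : ℕ → Finset S) (hQ : ∀ n ≤ N, Q n ⊆ ceK P γ πseq s₀ β n) :
    (1 / 2) * ∑ n ∈ Finset.range (N + 1),
        (⨆ π : {π' : S → A → ℝ // IsPolicy π'}, ∑ s ∈ Q n, dvisit P γ π.1 (dirac s₀) s) ≤
      (∑ n ∈ Finset.range (N + 1), ε n) +
      (∑ s : S, ceBetaTilde P γ πseq s₀ β N s) +
      (∑ s : S, ⨆ π : {π' : S → A → ℝ // IsPolicy π'}, dvisit P γ π.1 (dirac s₀) s) := by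
  set g := fun s => ⨆ π : {π' : S → A → ℝ // IsPolicy π'}, dvisit P γ π.1 (dirac s₀) s
  have hg : ∀ s, 0 ≤ g s := fun s =>
    ((hP.isDist_dvisit (hπseq 0) (isDist_dirac s₀) hγ0 hγ1).1 s).trans
      (hP.dvisit_le_iSup (hπseq 0) (isDist_dirac s₀) hγ0 hγ1 s)
  have hround : ∀ n ∈ range (N + 1), (1 / 2) *
      (⨆ π : {π' : S → A → ℝ // IsPolicy π'}, ∑ s ∈ Q n, dvisit P γ π.1 (dirac s₀) s) ≤
      ε n + ∑ s ∈ ceK P γ πseq s₀ β n with ¬ceLast P γ πseq s₀ β N s = n,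
        ceD P γ πseq s₀ (n + 1) s +
      (1 / 2) * ∑ s ∈ ceK P γ πseq s₀ β n with ceLast P γ πseq s₀ β N s = n, g s :=
    fun n hn => by
      have hnN : n ≤ N := Nat.lt_succ_iff.mp (mem_range.mp hn)
      exact hP.half_iSup_le hπseq hγ0 hγ1 (hopt n hnN) (hQ n hnN) _
  have hlast : ∑ n ∈ range (N + 1),
      ∑ s ∈ ceK P γ πseq s₀ β n with ceLast P γ πseq s₀ β N s = n, g s ≤ ∑ s, g s :=
    (sum_le_sum fun n _ => sum_le_sum_of_subset_of_nonneg
      (filter_subset_filter _ (subset_univ _)) fun s _ _ => hg s).trans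
      (sum_fiberwise_le_sum_of_sum_fiber_nonneg fun n _ => sum_nonneg fun s _ => hg s)
  have hnotLast := hP.sum_sum_ceD_succ_le_sum_ceBetaTilde hπseq hγ0 hγ1 (s₀ := s₀) (β := β) N
  rw [mul_sum]
  refine (sum_le_sum hround).trans ?_
  rw [sum_add_distrib, sum_add_distrib, ← mul_sum]
  linarith [sum_nonneg fun s (_ : s ∈ univ) => hg s]

/-- generalization of Theorem 1 to subsets `Q_n ⊆ K_n`:
`½ Σ_{n=0}^N sup_{π∈Π} Σ_{s∈Q_n} d_{δ_{s₀}}^π(s)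
  ≤ Σ_{n=0}^N ε_n + Σ_s β̃(s) + Σ_s sup_{π∈Π} d_{δ_{s₀}}^π(s)`. -/
theorem stmt13_ce_provable_subsets
    (P : S → A → S → ℝ) (γ : ℝ) (hP : IsKernel P) (hγ0 : 0 ≤ γ) (hγ1 : γ < 1)
    (s₀ : S) (πseq : ℕ → S → A → ℝ) (hπseq : ∀ k, IsPolicy (πseq k))
    (β : ℕ → ℝ) (hβ : ∀ n, 0 ≤ β n) (N : ℕ)
    (ε : ℕ → ℝ) (hε : ∀ n ≤ N, 0 ≤ ε n)
    (hopt : ∀ n ≤ N,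
      (⨆ π : {π' : S → A → ℝ // IsPolicy π'},
        value P γ π.1 (ceR P γ πseq s₀ β n) (ceMu P γ πseq s₀ (n + 1))) ≤
      value P γ (πseq (n + 1)) (ceR P γ πseq s₀ β n) (ceMu P γ πseq s₀ (n + 1))
        + ε n)
    (Q : ℕ → Finset S) (hQ : ∀ n ≤ N, Q n ⊆ ceK P γ πseq s₀ β n) :
    (1 / 2) * ∑ n ∈ Finset.range (N + 1),
        (⨆ π : {π' : S → A → ℝ // IsPolicy π'}, ∑ s ∈ Q n, dvisit P γ π.1 (dirac s₀) s) ≤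
      (∑ n ∈ Finset.range (N + 1), ε n) +
      (∑ s : S, ceBetaTilde P γ πseq s₀ β N s) +
      (∑ s : S, ⨆ π : {π' : S → A → ℝ // IsPolicy π'}, dvisit P γ π.1 (dirac s₀) s) :=
  stmt13_ce_provable_subsets_general P γ hP hγ0 hγ1 s₀ πseq hπseq β N ε hopt Q hQ
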